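/- arXiv:1708.02565 — 2 statements merged into one kernel-verified Lean document; each statement's English description precedes it below -/
import Mathlib

section
/- Let G be a finite group, H ≤ K ≤ G subgroups, and U an irreducible finite-dimensional complex representation of K with U^H ≠ 0 and such that the pointwise stabilizer in K of U^H equals H, i.e., K_{(U^H)} = H. Let W = Ind_K^G(U) and let V be any irreducible component of W. Then G_{(W^H)} = H and K_{(V^H)} = H. -/
set_option synthInstance.maxHeartbeats 1000000
set_option maxHeartbeats 1000000

/-- The fixed-point subspace `V^H` of a subgroup `H` under a representation `ρ`. -/
def fixedSubmodule {G : Type*} [Group G] {V : Type*} [AddCommGroup V] [Module ℂ V]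
    (ρ : Representation ℂ G V) (H : Subgroup G) : Submodule ℂ V where
  carrier := {v | ∀ h ∈ H, ρ h v = v}
  add_mem' := by
    intro a b ha hb h hh
    rw [map_add, ha h hh, hb h hh]
  zero_mem' := by intro h hh; simp
  smul_mem' := by
    intro c v hv h hh
    rw [map_smul, hv h hh]

/-- The pointwise stabilizer subgroup `G_(X)` of a subset `X` under a representation `ρ`. -/
def repStab {G : Type*} [Group G] {V : Type*} [AddCommGroup V] [Module ℂ V]
    (ρ : Representation ℂ G V) (X : Set V) : Subgroup G where
  carrier := {g | ∀ x ∈ X, ρ g x = x}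
  one_mem' := by intro x hx; simp
  mul_mem' := by
    intro a b ha hb x hx
    rw [map_mul, Module.End.mul_apply, hb x hx, ha x hx]
  inv_mem' := by
    intro a ha x hx
    have h1 : ρ a x = x := ha x hx
    calc ρ a⁻¹ x = ρ a⁻¹ (ρ a x) := by rw [h1]
      _ = ρ (a⁻¹ * a) x := by rw [map_mul, Module.End.mul_apply]
      _ = x := by simp

/-- A representation is irreducible if the space is nontrivial and the only invariant
subspaces are `⊥` and `⊤`. -/
def IsIrredRep {G : Type*} [Group G] {V : Type*} [AddCommGroup V] [Module ℂ V]
    (ρ : Representation ℂ G V) : Prop :=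
  Nontrivial V ∧ ∀ p : Submodule ℂ V, (∀ g : G, ∀ v ∈ p, ρ g v ∈ p) → p = ⊥ ∨ p = ⊤

/-- The subrepresentation on an invariant submodule. -/
def subRep {G : Type*} [Group G] {V : Type*} [AddCommGroup V] [Module ℂ V]
    (ρ : Representation ℂ G V) (p : Submodule ℂ V)
    (hp : ∀ g : G, ∀ v ∈ p, ρ g v ∈ p) : Representation ℂ G p where
  toFun g := (ρ g).restrict (hp g)
  map_one' := by
    ext v
    simp [LinearMap.restrict_apply]
  map_mul' := by
    intro g g'
    ext v
    simp [LinearMap.restrict_apply, map_mul]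

/-- The carrier of the induced representation `Ind_K^G U`, realized as the space of
functions `f : G → U` satisfying `f (k * g) = σ k (f g)`; the canonical copy `eU` of `U`
inside it consists of the functions supported on `K`. -/
def indCarrier {G : Type*} [Group G] {U : Type*} [AddCommGroup U] [Module ℂ U]
    (K : Subgroup G) (σ : Representation ℂ K U) : Submodule ℂ (G → U) where
  carrier := {f | ∀ (k : K) (g : G), f (↑k * g) = σ k (f g)}
  add_mem' := by
    intro a b ha hb k g
    simp [ha k g, hb k g]
  zero_mem' := by intro k g; simp
  smul_mem' := by
    intro c f hf k g
    simp [hf k g]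

/-- The induced representation `Ind_K^G U`, with `G` acting by right translation. -/
def indRep {G : Type*} [Group G] {U : Type*} [AddCommGroup U] [Module ℂ U]
    (K : Subgroup G) (σ : Representation ℂ K U) :
    Representation ℂ G (indCarrier K σ) where
  toFun g :=
    { toFun := fun f => ⟨fun x => (f : G → U) (x * g), by
        intro k x
        have := f.2 k (x * g)
        simpa [mul_assoc] using this⟩
      map_add' := by intro a b; ext x; simp
      map_smul' := by intro c a; ext x; simp }
  map_one' := by ext f x; simp
  map_mul' := by
    intro g g'
    ext f x
    simp [mul_assoc]

/-!
Evaluation at `1` is a `K`-equivariant map `W → U`, so an element of `K` fixing a set `S ⊆ W`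
pointwise fixes its image in `U` pointwise. By irreducibility of `U` it maps the component `V`
onto `U`, and averaging over `H` shows that it maps `V^H` onto `U^H`; hence
`K_(V^H) ≤ K_(U^H) = H`. As `V^H ⊆ W^H`, also `K ∩ G_(W^H) ≤ H`. Finally `G_(W^H) ≤ K`: the
extension by zero of a nonzero `u ∈ U^H` lies in `W^H`, and `g ∉ K` moves its value `u` at `1`
to its value `0` at `g`.
-/

namespace Representation

variable {k G V W : Type*} [CommRing k] [Group G] [AddCommGroup V] [Module k V]
  [AddCommGroup W] [Module k W] {ρ : Representation k G V} {σ : Representation k G W}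
  {f : V →ₗ[k] W}

theorem IsIntertwiningMap.map_asAlgebraHom (hf : IsIntertwiningMap ρ σ f)
    (x : MonoidAlgebra k G) (v : V) :
    f (ρ.asAlgebraHom x v) = σ.asAlgebraHom x (f v) := by
  induction x using MonoidAlgebra.induction_on with
  | of g => simp only [asAlgebraHom_of, hf.isIntertwining]
  | add x y hx hy => simp only [map_add, LinearMap.add_apply, hx, hy]
  | smul r x hx => simp only [map_smul, LinearMap.smul_apply, hx]

theorem IsIntertwiningMap.exists_mem_inf_invariants_eq [Fintype G]
    [Invertible (Fintype.card G : k)] (hf : IsIntertwiningMap ρ σ f) {p : Submodule k V}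
    (hp : ∀ g, ∀ v ∈ p, ρ g v ∈ p) {w : W} (hw : w ∈ σ.invariants) (hwp : w ∈ p.map f) :
    ∃ v ∈ p ⊓ ρ.invariants, f v = w := by
  obtain ⟨v, hv, rfl⟩ := hwp
  refine ⟨ρ.averageMap v, ⟨asAlgebraHom_mem_of_forall_mem ρ p hp v hv _,
    averageMap_invariant ρ v⟩, ?_⟩
  rw [averageMap, hf.map_asAlgebraHom, ← averageMap, averageMap_id σ _ hw]

end Representation

section FixedPoints

variable {G V : Type*} [Group G] [AddCommGroup V] [Module ℂ V] (ρ : Representation ℂ G V)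

theorem repStab_anti {X Y : Set V} (h : X ⊆ Y) : repStab ρ Y ≤ repStab ρ X :=
  fun _ hg x hx => hg x (h hx)

theorem le_repStab_fixedSubmodule (H : Subgroup G) : H ≤ repStab ρ (fixedSubmodule ρ H) :=
  fun _ hh _ hv => hv _ hh

theorem invariants_comp_subtype (H : Subgroup G) :
    Representation.invariants (ρ.comp H.subtype) = fixedSubmodule ρ H :=
  Submodule.ext fun _ => Subtype.forall

theorem fixedSubmodule_comp_subtype_subgroupOf {H K : Subgroup G} (hHK : H ≤ K) :
    fixedSubmodule (ρ.comp K.subtype) (H.subgroupOf K) = fixedSubmodule ρ H :=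
  Submodule.ext fun _ => ⟨fun hv h hh => hv ⟨h, hHK hh⟩ hh, fun hv h hh => hv h hh⟩

end FixedPoints

namespace indCarrier

variable {G U : Type*} [Group G] [AddCommGroup U] [Module ℂ U] {K : Subgroup G}
  {σ : Representation ℂ K U}

theorem apply_coe (f : indCarrier K σ) (k : K) : (f : G → U) k = σ k ((f : G → U) 1) := by
  simpa using f.2 k 1

variable (K σ) in
def evalOne : indCarrier K σ →ₗ[ℂ] U where
  toFun f := (f : G → U) 1
  map_add' _ _ := rfl
  map_smul' _ _ := rfl

@[simp]
theorem evalOne_apply (f : indCarrier K σ) : evalOne K σ f = (f : G → U) 1 := rfl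

@[simp]
theorem evalOne_indRep (g : G) (f : indCarrier K σ) :
    evalOne K σ (indRep K σ g f) = (f : G → U) g := by
  show (f : G → U) (1 * g) = _
  rw [one_mul]

theorem isIntertwiningMap_evalOne :
    Representation.IsIntertwiningMap ((indRep K σ).comp K.subtype) σ (evalOne K σ) :=
  ⟨fun k f => (evalOne_indRep _ f).trans (apply_coe f k)⟩

open Classical in
variable (σ) in
noncomputable def extendByZero (u : U) : indCarrier K σ :=
  ⟨fun x => if hx : x ∈ K then σ ⟨x, hx⟩ u else 0, fun k x => by
    dsimp only
    by_cases hx : x ∈ K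
    · rw [dif_pos hx, dif_pos (K.mul_mem k.2 hx)]
      exact LinearMap.congr_fun (map_mul σ k ⟨x, hx⟩) u
    · simp [hx, (K.mul_mem_cancel_left k.2).not.mpr hx]⟩

theorem extendByZero_apply_of_mem (u : U) {x : G} (hx : x ∈ K) :
    (extendByZero σ u : G → U) x = σ ⟨x, hx⟩ u :=
  dif_pos hx

theorem extendByZero_apply_of_notMem (u : U) {x : G} (hx : x ∉ K) :
    (extendByZero σ u : G → U) x = 0 :=
  dif_neg hx

theorem extendByZero_apply_one (u : U) : (extendByZero σ u : G → U) 1 = u := by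
  rw [extendByZero_apply_of_mem u K.one_mem]
  exact LinearMap.congr_fun (map_one σ) u

theorem extendByZero_mem_fixedSubmodule {H : Subgroup G} (hHK : H ≤ K) {u : U}
    (hu : u ∈ fixedSubmodule σ (H.subgroupOf K)) :
    extendByZero σ u ∈ fixedSubmodule (indRep K σ) H := by
  intro h hh
  ext x
  show (extendByZero σ u : G → U) (x * h) = (extendByZero σ u : G → U) x
  by_cases hx : x ∈ K
  · rw [extendByZero_apply_of_mem u hx, extendByZero_apply_of_mem u (K.mul_mem hx (hHK hh)),
      ← congrArg (σ ⟨x, hx⟩) (hu ⟨h, hHK hh⟩ hh)]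
    exact LinearMap.congr_fun (map_mul σ ⟨x, hx⟩ ⟨h, hHK hh⟩) u
  · rw [extendByZero_apply_of_notMem u hx,
      extendByZero_apply_of_notMem u ((K.mul_mem_cancel_right (hHK hh)).not.mpr hx)]

theorem repStab_fixedSubmodule_le {H : Subgroup G} (hHK : H ≤ K)
    (hUH : fixedSubmodule σ (H.subgroupOf K) ≠ ⊥) :
    repStab (indRep K σ) (fixedSubmodule (indRep K σ) H) ≤ K := by
  obtain ⟨u, hu, hu0⟩ := Submodule.exists_mem_ne_zero_of_ne_bot hUH
  intro g hg
  by_contra hgK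
  have hfix := congrArg (evalOne K σ) (hg _ (extendByZero_mem_fixedSubmodule hHK hu))
  rw [evalOne_indRep, extendByZero_apply_of_notMem u hgK, evalOne_apply,
    extendByZero_apply_one] at hfix
  exact hu0 hfix.symm

theorem inf_repStab_le_map_repStab_image (S : Set (indCarrier K σ)) :
    K ⊓ repStab (indRep K σ) S ≤ (repStab σ (evalOne K σ '' S)).map K.subtype := by
  rintro g ⟨hgK, hgS⟩
  refine ⟨⟨g, hgK⟩, ?_, rfl⟩
  rintro _ ⟨f, hf, rfl⟩
  rw [← isIntertwiningMap_evalOne.isIntertwining]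
  exact congrArg (evalOne K σ) (hgS f hf)

theorem map_evalOne_eq_top (hσ : IsIrredRep σ) {p : Submodule ℂ (indCarrier K σ)}
    (hp : ∀ g : G, ∀ v ∈ p, indRep K σ g v ∈ p) (hp0 : p ≠ ⊥) :
    p.map (evalOne K σ) = ⊤ := by
  refine (hσ.2 _ ?_).resolve_left ?_
  · rintro k _ ⟨f, hf, rfl⟩
    exact ⟨_, hp k f hf, isIntertwiningMap_evalOne.isIntertwining k f⟩
  · obtain ⟨f, hf, hf0⟩ := Submodule.exists_mem_ne_zero_of_ne_bot hp0
    obtain ⟨x, hx⟩ := Function.ne_iff.mp fun h => hf0 (Subtype.ext h)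
    exact (Submodule.ne_bot_iff _).mpr ⟨_, ⟨_, hp x f hf, rfl⟩, by rwa [evalOne_indRep]⟩

theorem fixedSubmodule_le_map_evalOne_inf {H : Subgroup G} [Finite H] (hHK : H ≤ K)
    {p : Submodule ℂ (indCarrier K σ)} (hp : ∀ g : G, ∀ v ∈ p, indRep K σ g v ∈ p)
    (hpU : p.map (evalOne K σ) = ⊤) :
    fixedSubmodule σ (H.subgroupOf K) ≤
      (fixedSubmodule (indRep K σ) H ⊓ p).map (evalOne K σ) := by
  intro u hu
  have : Finite (H.subgroupOf K) :=
    Finite.of_equiv _ (Subgroup.subgroupOfEquivOfLe hHK).symm.toEquiv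
  have : Fintype (H.subgroupOf K) := Fintype.ofFinite _
  have : Invertible (Fintype.card (H.subgroupOf K) : ℂ) :=
    invertibleOfNonzero (Nat.cast_ne_zero.mpr Fintype.card_ne_zero)
  have hev : Representation.IsIntertwiningMap
      (((indRep K σ).comp K.subtype).comp (H.subgroupOf K).subtype)
      (σ.comp (H.subgroupOf K).subtype) (evalOne K σ) :=
    ⟨fun h => (isIntertwiningMap_evalOne (σ := σ)).isIntertwining h⟩
  obtain ⟨f, ⟨hfp, hfH⟩, rfl⟩ := hev.exists_mem_inf_invariants_eq (fun h => hp h)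
    (by rwa [invariants_comp_subtype]) (hpU ▸ Submodule.mem_top)
  rw [invariants_comp_subtype, fixedSubmodule_comp_subtype_subgroupOf _ hHK] at hfH
  exact ⟨f, ⟨hfH, hfp⟩, rfl⟩

end indCarrier

open indCarrier in
theorem repStab_eq_of_repStab_eq_general {G : Type*} [Group G] [Finite G]
    (H K : Subgroup G) (hHK : H ≤ K)
    {U : Type*} [AddCommGroup U] [Module ℂ U]
    (σ : Representation ℂ K U) (hσ : IsIrredRep σ)
    (hUH : fixedSubmodule σ (H.subgroupOf K) ≠ ⊥)
    (hKU : (repStab σ ↑(fixedSubmodule σ (H.subgroupOf K))).map K.subtype = H)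
    (p : Submodule ℂ (indCarrier K σ))
    (hp : ∀ g : G, ∀ v ∈ p, indRep K σ g v ∈ p)
    (hpirr : IsIrredRep (V := ↥p) (subRep (indRep K σ) p hp)) :
    repStab (indRep K σ) ↑(fixedSubmodule (indRep K σ) H) = H ∧
      K ⊓ repStab (indRep K σ) ↑(fixedSubmodule (indRep K σ) H ⊓ p) = H := by
  have hp0 : p ≠ ⊥ := Submodule.nontrivial_iff_ne_bot.mp hpirr.1
  have hUH_image : (fixedSubmodule σ (H.subgroupOf K) : Set U) ⊆
      evalOne K σ '' ↑(fixedSubmodule (indRep K σ) H ⊓ p) := by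
    rw [← Submodule.map_coe]
    exact fixedSubmodule_le_map_evalOne_inf hHK hp (map_evalOne_eq_top hσ hp hp0)
  have hVH : K ⊓ repStab (indRep K σ) ↑(fixedSubmodule (indRep K σ) H ⊓ p) = H := by
    refine le_antisymm ?_ (le_inf hHK
      ((le_repStab_fixedSubmodule _ H).trans (repStab_anti _ inf_le_left)))
    calc K ⊓ repStab (indRep K σ) ↑(fixedSubmodule (indRep K σ) H ⊓ p)
        ≤ (repStab σ (evalOne K σ '' ↑(fixedSubmodule (indRep K σ) H ⊓ p))).map K.subtype :=
          inf_repStab_le_map_repStab_image _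
      _ ≤ (repStab σ ↑(fixedSubmodule σ (H.subgroupOf K))).map K.subtype :=
          Subgroup.map_mono (repStab_anti σ hUH_image)
      _ = H := hKU
  refine ⟨le_antisymm ?_ (le_repStab_fixedSubmodule _ H), hVH⟩
  calc repStab (indRep K σ) ↑(fixedSubmodule (indRep K σ) H)
      ≤ K ⊓ repStab (indRep K σ) ↑(fixedSubmodule (indRep K σ) H ⊓ p) :=
        le_inf (repStab_fixedSubmodule_le hHK hUH) (repStab_anti _ inf_le_left)
    _ = H := hVH

/-- For `H ≤ K ≤ G`, `U` an irreducible representation of `K` with `U^H ≠ 0` and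
`K_(U^H) = H`, and `V` any irreducible component of `W = Ind_K^G U`: `G_(W^H) = H`
and `K_(V^H) = H`. -/
theorem repStab_eq_of_repStab_eq {G : Type*} [Group G] [Finite G]
    (H K : Subgroup G) (hHK : H ≤ K)
    {U : Type*} [AddCommGroup U] [Module ℂ U] [FiniteDimensional ℂ U]
    (σ : Representation ℂ K U) (hσ : IsIrredRep σ)
    (hUH : fixedSubmodule σ (H.subgroupOf K) ≠ ⊥)
    (hKU : (repStab σ ↑(fixedSubmodule σ (H.subgroupOf K))).map K.subtype = H)
    (p : Submodule ℂ (indCarrier K σ))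
    (hp : ∀ g : G, ∀ v ∈ p, indRep K σ g v ∈ p)
    (hpirr : IsIrredRep (V := ↥p) (subRep (indRep K σ) p hp)) :
    repStab (indRep K σ) ↑(fixedSubmodule (indRep K σ) H) = H ∧
      K ⊓ repStab (indRep K σ) ↑(fixedSubmodule (indRep K σ) H ⊓ p) = H :=
  repStab_eq_of_repStab_eq_general H K hHK σ hσ hUH hKU p hp hpirr
end

section
/- Let G be a finite group admitting an ordered chain of subgroups {e} = H_0 < H_1 < ... < H_ℓ = G such that each interval [H_i, H_{i+1}] in the subgroup lattice of H_{i+1} is a distributive lattice. Then G admits a faithful finite-dimensional complex representation that is a direct sum of at most ℓ irreducible representations. (Equivalently, the minimal number of irreducible components of a faithful complex representation of G is at most the minimal length ℓ of such a chain.) -/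
/-- The representation of `G` on the direct sum (product) of a family of
representation spaces. -/
def piRep {G : Type*} [Group G] {ι : Type*} {V : ι → Type*}
    [∀ i, AddCommGroup (V i)] [∀ i, Module ℂ (V i)]
    (ρ : ∀ i, Representation ℂ G (V i)) : Representation ℂ G (∀ i, V i) where
  toFun g := LinearMap.pi fun i => (ρ i g).comp (LinearMap.proj i)
  map_one' := by ext v i; simp
  map_mul' := by intro g h; ext v i; simp

/-!
Induct along the chain. Suppose irreducible representations have been found whose common kernel
`N` meets `H_i` trivially, and put `K = H_{i+1}`, `N₀ = N ⊓ K`. Because `N₀ ⊓ H_i = ⊥`, the map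
`X ↦ H_i ⊔ X` embeds the lattice of subgroups of `N₀` normalized by `H_i` into the distributive
interval `[H_i, K]`, with left inverse `Y ↦ Y ⊓ N₀`. Hence the minimal nontrivial subgroups
`M_1, …, M_r` of `N₀` normalized by `K` are independent, and, being pairwise disjoint and
normalizing each other, they commute. Pick `a_j ∈ M_j` with `a_j ≠ 1`. Independence makes
`y = (a_1 - 1) ⋯ (a_r - 1)` a nonzero element of `ℂ[G]`, and commutativity puts `y` in the image
of `a_j - 1` for every `j`. An irreducible summand of `ℂ[G]` onto which `y` projects nontrivially
is moved by every `a_j`, so its kernel meets `N₀` in a `K`-normal subgroup containing no `M_j`,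
that is, trivially.
-/

open scoped MonoidAlgebra Pointwise

def DistribOn {α : Type*} [Lattice α] (s : Set α) : Prop :=
  ∀ x ∈ s, ∀ y ∈ s, ∀ z ∈ s, x ⊓ (y ⊔ z) = x ⊓ y ⊔ x ⊓ z

theorem DistribOn.disjoint_finset_sup {α ι : Type*} [Lattice α] [OrderBot α] {L : Sublattice α}
    (hL : DistribOn (L : Set α)) (hbot : ⊥ ∈ L) {a : α} (ha : a ∈ L) {t : Finset ι}
    {f : ι → α} (hf : ∀ i ∈ t, f i ∈ L) (hdisj : ∀ i ∈ t, Disjoint a (f i)) :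
    Disjoint a (t.sup f) := by
  classical
  induction t using Finset.induction_on with
  | empty => exact disjoint_bot_right
  | insert i t _ ih =>
    have hft : ∀ j ∈ t, f j ∈ L := fun j hj => hf j (Finset.mem_insert_of_mem hj)
    have hsup : t.sup f ∈ L := Finset.sup_mem _ hbot (fun _ hx _ hy => L.sup_mem hx hy) t f hft
    rw [Finset.sup_insert, disjoint_iff, hL a ha _ (hf i (Finset.mem_insert_self i t)) _ hsup,
      (hdisj i (Finset.mem_insert_self i t)).eq_bot,
      (ih hft fun j hj => hdisj j (Finset.mem_insert_of_mem hj)).eq_bot, sup_bot_eq]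

namespace Subgroup

variable {G : Type*} [Group G]

def normalizedSublattice (H N : Subgroup G) : Sublattice (Subgroup G) where
  carrier := {X | X ≤ N ∧ H ≤ normalizer X}
  supClosed' _ hX _ hY := ⟨sup_le hX.1 hY.1,
    (le_inf hX.2 hY.2).trans (normalizer_inf_normalizer_le_normalizer_sup _ _)⟩
  infClosed' _ hX _ hY := ⟨inf_le_left.trans hX.1,
    (le_inf hX.2 hY.2).trans inf_normalizer_le_normalizer_inf⟩

def minimalNormalizedBy (K N : Subgroup G) : Set (Subgroup G) :=
  {M | M ≤ N ∧ Minimal (fun X : Subgroup G => K ≤ normalizer X ∧ X ≠ ⊥) M}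

variable {H K N M M' X Y : Subgroup G}

lemma bot_mem_normalizedSublattice : ⊥ ∈ normalizedSublattice H N :=
  ⟨bot_le, le_normalizer_of_normal⟩

lemma sup_inf_eq_of_mem_normalizedSublattice (hHN : Disjoint H N)
    (hX : X ∈ normalizedSublattice H N) : (H ⊔ X) ⊓ N = X := by
  refine SetLike.coe_injective ?_
  rw [coe_inf, coe_mul_of_left_le_normalizer_right H X hX.2, Set.inter_comm,
    ← inf_mul_assoc N H X hX.1, inf_comm, hHN.eq_bot, coe_bot, Set.singleton_one, one_mul]

lemma sup_inf_sup_eq_of_mem_normalizedSublattice (hHN : Disjoint H N)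
    (hX : X ∈ normalizedSublattice H N) (hY : Y ∈ normalizedSublattice H N) :
    (H ⊔ X) ⊓ (H ⊔ Y) = H ⊔ X ⊓ Y := by
  have hXY : X ⊓ (H ⊔ Y) = X ⊓ Y := by
    conv_lhs => rw [← inf_eq_left.mpr hX.1]
    rw [inf_assoc, inf_comm N, sup_inf_eq_of_mem_normalizedSublattice hHN hY]
  refine SetLike.coe_injective ?_
  rw [coe_inf, coe_mul_of_left_le_normalizer_right H X hX.2, ← mul_inf_assoc _ _ _ le_sup_left,
    hXY, coe_mul_of_left_le_normalizer_right H _ ((normalizedSublattice H N).inf_mem hX hY).2]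

lemma distribOn_normalizedSublattice (hHK : H ≤ K) (hNK : N ≤ K) (hHN : Disjoint H N)
    (hdist : DistribOn (Set.Icc H K)) :
    DistribOn (normalizedSublattice H N : Set (Subgroup G)) := by
  intro X hX Y hY Z hZ
  set L := normalizedSublattice H N
  have hIcc : ∀ {A}, A ∈ L → H ⊔ A ∈ Set.Icc H K :=
    fun hA => ⟨le_sup_left, sup_le hHK (hA.1.trans hNK)⟩
  have hmeet : ∀ {A B}, A ∈ L → B ∈ L → (H ⊔ A) ⊓ (H ⊔ B) = H ⊔ A ⊓ B :=
    sup_inf_sup_eq_of_mem_normalizedSublattice hHN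
  have hret : ∀ {A}, A ∈ L → (H ⊔ A) ⊓ N = A := sup_inf_eq_of_mem_normalizedSublattice hHN
  calc X ⊓ (Y ⊔ Z) = (H ⊔ X ⊓ (Y ⊔ Z)) ⊓ N := (hret (L.inf_mem hX (L.sup_mem hY hZ))).symm
    _ = ((H ⊔ X) ⊓ ((H ⊔ Y) ⊔ (H ⊔ Z))) ⊓ N := by
      rw [← hmeet hX (L.sup_mem hY hZ), sup_sup_distrib_left]
    _ = ((H ⊔ X ⊓ Y) ⊔ (H ⊔ X ⊓ Z)) ⊓ N := by
      rw [hdist _ (hIcc hX) _ (hIcc hY) _ (hIcc hZ), hmeet hX hY, hmeet hX hZ]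
    _ = X ⊓ Y ⊔ X ⊓ Z := by
      rw [← sup_sup_distrib_left, hret (L.sup_mem (L.inf_mem hX hY) (L.inf_mem hX hZ))]

lemma commute_of_disjoint_of_le_normalizer (hM : M ≤ normalizer M') (hM' : M' ≤ normalizer M)
    (hdisj : Disjoint M M') {x y : G} (hx : x ∈ M) (hy : y ∈ M') : Commute x y := by
  have : ⁅M, M'⁆ = ⊥ := le_bot_iff.mp <| hdisj.eq_bot ▸
    le_inf (le_normalizer_iff_commutator_le_left.mp hM')
      (le_normalizer_iff_commutator_le_right.mp hM)
  exact (mem_centralizer_iff.mp (commutator_eq_bot_iff_le_centralizer.mp this hx) y hy).symm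

lemma disjoint_of_mem_minimalNormalizedBy (hM : M ∈ minimalNormalizedBy K N)
    (hM' : M' ∈ minimalNormalizedBy K N) (hne : M ≠ M') : Disjoint M M' := by
  by_contra h
  have hP : K ≤ normalizer (M ⊓ M') ∧ M ⊓ M' ≠ ⊥ :=
    ⟨(le_inf hM.2.1.1 hM'.2.1.1).trans inf_normalizer_le_normalizer_inf, disjoint_iff.not.mp h⟩
  exact hne ((hM.2.eq_of_le hP inf_le_left).symm.trans (hM'.2.eq_of_le hP inf_le_right))

lemma commute_of_mem_minimalNormalizedBy (hNK : N ≤ K) (hM : M ∈ minimalNormalizedBy K N)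
    (hM' : M' ∈ minimalNormalizedBy K N) (hne : M ≠ M') {x y : G} (hx : x ∈ M) (hy : y ∈ M') :
    Commute x y :=
  commute_of_disjoint_of_le_normalizer ((hM.1.trans hNK).trans hM'.2.1.1)
    ((hM'.1.trans hNK).trans hM.2.1.1) (disjoint_of_mem_minimalNormalizedBy hM hM' hne) hx hy

lemma exists_mem_minimalNormalizedBy_le [Finite G] (hXN : X ≤ N) (hX : K ≤ normalizer X)
    (hX' : X ≠ ⊥) : ∃ M ∈ minimalNormalizedBy K N, M ≤ X := by
  obtain ⟨M, hMX, hM⟩ := exists_minimal_le_of_wellFoundedLT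
    (fun X : Subgroup G => K ≤ normalizer X ∧ X ≠ ⊥) X ⟨hX, hX'⟩
  exact ⟨M, ⟨hMX.trans hXN, hM⟩, hMX⟩

lemma disjoint_finset_sup_of_mem_minimalNormalizedBy (hHK : H ≤ K) (hNK : N ≤ K)
    (hHN : Disjoint H N) (hdist : DistribOn (Set.Icc H K)) {T : Finset (Subgroup G)}
    (hT : ∀ M' ∈ T, M' ∈ minimalNormalizedBy K N) (hM : M ∈ minimalNormalizedBy K N)
    (hMT : M ∉ T) : Disjoint M (T.sup id) := by
  have hL : ∀ {X}, X ∈ minimalNormalizedBy K N → X ∈ normalizedSublattice H N :=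
    fun hX => ⟨hX.1, hHK.trans hX.2.1.1⟩
  exact (distribOn_normalizedSublattice hHK hNK hHN hdist).disjoint_finset_sup
    bot_mem_normalizedSublattice (hL hM) (fun M' hM' => hL (hT M' hM')) fun M' hM' =>
      disjoint_of_mem_minimalNormalizedBy hM (hT M' hM') (ne_of_mem_of_not_mem hM' hMT).symm

end Subgroup

namespace Subrepresentation

section Field

variable {k G V : Type*} [Field k] [Group G] [AddCommGroup V] [Module k V]
  {ρ : Representation k G V}

lemma toSubmodule_strictMono : StrictMono (toSubmodule : Subrepresentation ρ → Submodule k V) :=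
  fun _ _ h => h

instance [FiniteDimensional k V] : IsAtomic (Subrepresentation ρ) :=
  haveI := toSubmodule_strictMono (ρ := ρ).wellFoundedLT
  isAtomic_of_orderBot_wellFounded_lt wellFounded_lt

lemma isCompl_toSubmodule {σ τ : Subrepresentation ρ} (h : IsCompl σ τ) :
    IsCompl σ.toSubmodule τ.toSubmodule :=
  ⟨disjoint_iff.mpr (congrArg toSubmodule h.inf_eq_bot),
    codisjoint_iff.mpr (congrArg toSubmodule h.sup_eq_top)⟩

def span (ρ : Representation k G V) (v : V) : Subrepresentation ρ where
  toSubmodule := Submodule.span k (Set.range fun g => ρ g v)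
  apply_mem_toSubmodule g w hw := by
    induction hw using Submodule.span_induction with
    | mem _ hx =>
      obtain ⟨h, rfl⟩ := hx
      exact Submodule.subset_span ⟨g * h, by simp⟩
    | zero => simp
    | add _ _ _ _ hx hy => simpa using Submodule.add_mem _ hx hy
    | smul _ _ _ hx => simpa using Submodule.smul_mem _ _ hx

lemma mem_span_self (v : V) : v ∈ span ρ v :=
  Submodule.subset_span ⟨1, by simp⟩

lemma span_le {σ : Subrepresentation ρ} {v : V} (hv : v ∈ σ) : span ρ v ≤ σ :=
  (Submodule.span_le (p := σ.toSubmodule)).mpr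
    (Set.range_subset_iff.mpr fun g => σ.apply_mem_toSubmodule g hv)

lemma commute_projection {σ τ : Subrepresentation ρ} (h : IsCompl σ τ) (g : G) :
    Commute (σ.toSubmodule.projection τ.toSubmodule (isCompl_toSubmodule h)) (ρ g) := by
  refine (LinearMap.IsIdempotentElem.commute_iff
    (Submodule.isIdempotentElem_projection _)).mpr ⟨?_, ?_⟩ <;>
    simp only [Submodule.range_projection, Submodule.ker_projection, Module.End.mem_invtSubmodule]
  exacts [fun _ hv => σ.apply_mem_toSubmodule g hv, fun _ hv => τ.apply_mem_toSubmodule g hv]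

end Field

variable {G V : Type*} [Group G] [AddCommGroup V] [Module ℂ V] {ρ : Representation ℂ G V}

lemma isIrredRep_toRepresentation {σ : Subrepresentation ρ} (hσ : IsAtom σ) :
    IsIrredRep σ.toRepresentation := by
  refine ⟨Submodule.nontrivial_iff_ne_bot.mpr fun h => hσ.1 (toSubmodule_injective h),
    fun p hp => ?_⟩
  let τ : Subrepresentation ρ := ⟨p.map σ.toSubmodule.subtype, by
    rintro g _ ⟨w, hw, rfl⟩
    exact ⟨_, hp g w hw, rfl⟩⟩
  have hτ : τ ≤ σ := by
    rintro _ ⟨w, _, rfl⟩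
    exact w.2
  have hinj := Submodule.map_injective_of_injective σ.toSubmodule.injective_subtype
  refine (hσ.le_iff.mp hτ).imp (fun h => hinj ?_) (fun h => hinj ?_)
  · rw [Submodule.map_bot]
    exact congrArg toSubmodule h
  · rw [Submodule.map_subtype_top]
    exact congrArg toSubmodule h

end Subrepresentation

open Subrepresentation in
/-- The irreducible summand is chosen inside the subrepresentation generated by `y`, so that the
projection of `y` onto it along an invariant complement is nonzero. -/
theorem exists_isIrredRep_notMem_ker {G V : Type} [Group G] [Finite G] [AddCommGroup V]
    [Module ℂ V] [FiniteDimensional ℂ V] {ρ : Representation ℂ G V} {y : V} (hy : y ≠ 0)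
    {s : Set G} (hs : ∀ a ∈ s, y ∈ LinearMap.range (ρ a - 1)) :
    ∃ W : FDRep ℂ G, IsIrredRep W.ρ ∧ ∀ a ∈ s, a ∉ W.ρ.ker := by
  have hspan : span ρ y ≠ ⊥ := fun h =>
    hy ((Submodule.mem_bot ℂ).mp (h ▸ mem_span_self y : y ∈ (⊥ : Subrepresentation ρ)))
  obtain ⟨σ, hσ, hσy⟩ := (eq_bot_or_exists_atom_le (span ρ y)).resolve_left hspan
  obtain ⟨τ, hστ⟩ := exists_isCompl σ
  set P := σ.toSubmodule.projection τ.toSubmodule (isCompl_toSubmodule hστ)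
  have hPy : P y ≠ 0 := by
    rw [Ne, Submodule.projection_apply_eq_zero_iff]
    exact fun hyτ => hσ.1 (hστ.disjoint.eq_bot_of_le (hσy.trans (span_le hyτ)))
  refine ⟨FDRep.of σ.toRepresentation, isIrredRep_toRepresentation hσ, fun a ha hker => hPy ?_⟩
  obtain ⟨z, rfl⟩ := hs a ha
  have hfix : ∀ w ∈ σ, ρ a w = w := fun w hw =>
    congrArg Subtype.val (LinearMap.congr_fun (MonoidHom.mem_ker.mp hker) ⟨w, hw⟩)
  rw [LinearMap.sub_apply, Module.End.one_apply, map_sub, ← Module.End.mul_apply,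
    (commute_projection hστ a).eq, Module.End.mul_apply,
    hfix _ (Submodule.projection_apply_mem _ _), sub_self]

namespace Representation

variable {k G : Type*} [CommRing k] [Group G]

lemma coeff_ofMulAction_sub_eq_zero {S S' : Subgroup G} (hSS' : S ≤ S') {y : k[G]}
    (hyS : ∀ x ∉ S, y.coeff x = 0) {g : G} (hg : g ∈ S') {x : G} (hx : x ∉ S') :
    (ofMulAction k G G g y - y).coeff x = 0 := by
  have hgx : g⁻¹ * x ∉ S' := fun h => hx (by simpa using S'.mul_mem hg h)
  simp [hyS _ (fun h => hx (hSS' h)), hyS _ (fun h => hgx (hSS' h))]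

lemma ofMulAction_sub_ne_zero {S : Subgroup G} {y : k[G]} (hy : y ≠ 0)
    (hyS : ∀ x ∉ S, y.coeff x = 0) {g : G} (hg : g ∉ S) : ofMulAction k G G g y - y ≠ 0 := by
  obtain ⟨x, hx⟩ := DFunLike.ne_iff.mp (mt MonoidAlgebra.ext hy)
  have hxS : x ∈ S := by_contra fun h => hx (hyS x h)
  have hgx : g⁻¹ * x ∉ S := fun h => hg (by simpa using S.mul_mem hxS (S.inv_mem h))
  intro h
  apply hx
  simpa [hyS _ hgx] using congrArg (MonoidAlgebra.coeff · x) h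

/-- The witness is `∏ i ∈ s, (a i - 1)` in `k[G]`. Multiplying a nonzero partial product, supported
in the subgroup `S` generated by the earlier `a j`, by `a i - 1` keeps it nonzero because the coset
`a i * S` is disjoint from `S`. -/
theorem exists_ne_zero_forall_mem_range_ofMulAction_sub_one [Nontrivial k] {ι : Type*}
    [DecidableEq ι] (s : Finset ι) (a : ι → G) (hcomm : ∀ i ∈ s, ∀ j ∈ s, Commute (a i) (a j))
    (hindep : ∀ i ∈ s, a i ∉ Subgroup.closure (a '' ↑(s.erase i))) :
    ∃ y : k[G], y ≠ 0 ∧ ∀ i ∈ s, y ∈ LinearMap.range (ofMulAction k G G (a i) - 1) := by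
  suffices ∃ y : k[G], y ≠ 0 ∧ (∀ x ∉ Subgroup.closure (a '' s), y.coeff x = 0) ∧
      ∀ i ∈ s, y ∈ LinearMap.range (ofMulAction k G G (a i) - 1) from
    let ⟨y, hy, _, hrange⟩ := this; ⟨y, hy, hrange⟩
  induction s using Finset.induction_on with
  | empty => exact ⟨MonoidAlgebra.single 1 1, by simp, fun x hx => by simp_all, by simp⟩
  | insert i s hi ih =>
    have hsub : ∀ j ∈ s, j ∈ insert i s := fun j hj => Finset.mem_insert_of_mem hj
    obtain ⟨y, hy, hyS, hrange⟩ := ih (fun j hj l hl => hcomm j (hsub j hj) l (hsub l hl))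
      fun j hj h => hindep j (hsub j hj) (Subgroup.closure_mono (Set.image_mono
        (Finset.coe_subset.mpr (Finset.erase_subset_erase j (Finset.subset_insert i s)))) h)
    have hS : Subgroup.closure (a '' s) ≤ Subgroup.closure (a '' ↑(insert i s)) :=
      Subgroup.closure_mono (by simp [Set.image_insert_eq])
    have hai : a i ∈ Subgroup.closure (a '' ↑(insert i s)) := Subgroup.subset_closure (by simp)
    have hais : a i ∉ Subgroup.closure (a '' s) := by
      simpa [Finset.erase_insert hi] using hindep i (Finset.mem_insert_self i s)
    refine ⟨ofMulAction k G G (a i) y - y, ofMulAction_sub_ne_zero hy hyS hais,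
      fun x hx => coeff_ofMulAction_sub_eq_zero hS hyS hai hx, fun j hj => ?_⟩
    rcases Finset.mem_insert.mp hj with rfl | hj
    · exact ⟨y, rfl⟩
    · obtain ⟨z, rfl⟩ := hrange j hj
      have hc : Commute (ofMulAction k G G (a i) - 1) (ofMulAction k G G (a j) - 1) :=
        (((hcomm i (Finset.mem_insert_self i s) j (hsub j hj)).map _).sub_right
          (Commute.one_right _)).sub_left (Commute.one_left _)
      exact ⟨(ofMulAction k G G (a i) - 1) z, by
        rw [← Module.End.mul_apply, ← hc.eq, Module.End.mul_apply]; rfl⟩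

end Representation

lemma mem_ker_piRep {G : Type*} [Group G] {ι : Type*} {V : ι → Type*}
    [∀ i, AddCommGroup (V i)] [∀ i, Module ℂ (V i)] (ρ : ∀ i, Representation ℂ G (V i))
    {g : G} : g ∈ (piRep ρ).ker ↔ ∀ i, g ∈ (ρ i).ker := by
  classical
  simp only [MonoidHom.mem_ker]
  refine ⟨fun h i => LinearMap.ext fun v => ?_,
    fun h => LinearMap.ext fun v => funext fun i => ?_⟩
  · simpa [piRep] using congrFun (LinearMap.congr_fun h (Pi.single i v)) i
  · simp [piRep, h i]

open Subgroup

theorem exists_isIrredRep_forall_not_le_ker {G : Type} [Group G] [Finite G]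
    {H K N : Subgroup G} (hHK : H ≤ K) (hNK : N ≤ K) (hHN : Disjoint H N)
    (hdist : DistribOn (Set.Icc H K)) :
    ∃ W : FDRep ℂ G, IsIrredRep W.ρ ∧ ∀ M ∈ minimalNormalizedBy K N, ¬M ≤ W.ρ.ker := by
  classical
  set T := (Set.toFinite (minimalNormalizedBy K N)).toFinset
  have hT : ∀ {M}, M ∈ T ↔ M ∈ minimalNormalizedBy K N := Set.Finite.mem_toFinset _
  choose! a haM ha1 using fun M (hM : M ∈ T) =>
    (bot_or_exists_ne_one M).resolve_left (hT.mp hM).2.1.2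
  have hindep : ∀ M ∈ T, a M ∉ closure (a '' ↑(T.erase M)) := by
    intro M hM hcl
    have hle : closure (a '' ↑(T.erase M)) ≤ (T.erase M).sup id := (closure_le _).mpr <| by
      rintro _ ⟨M', hM', rfl⟩
      exact Finset.le_sup (f := id) hM' (haM M' (Finset.mem_of_mem_erase hM'))
    have hdisj := disjoint_finset_sup_of_mem_minimalNormalizedBy hHK hNK hHN hdist
      (fun M' hM' => hT.mp (Finset.mem_of_mem_erase hM')) (hT.mp hM) (Finset.notMem_erase M T)
    exact ha1 M hM (disjoint_def.mp hdisj (haM M hM) (hle hcl))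
  have hcomm : ∀ M ∈ T, ∀ M' ∈ T, Commute (a M) (a M') := by
    intro M hM M' hM'
    obtain rfl | hne := eq_or_ne M M'
    · exact Commute.refl _
    · exact commute_of_mem_minimalNormalizedBy hNK (hT.mp hM) (hT.mp hM') hne (haM M hM)
        (haM M' hM')
  obtain ⟨y, hy, hyrange⟩ :=
    Representation.exists_ne_zero_forall_mem_range_ofMulAction_sub_one (k := ℂ) T a hcomm hindep
  obtain ⟨W, hW, hWa⟩ := exists_isIrredRep_notMem_ker hy (s := a '' T) <| by
    rintro _ ⟨M, hM, rfl⟩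
    exact hyrange M hM
  exact ⟨W, hW, fun M hM hMW => hWa _ ⟨M, hT.mpr hM, rfl⟩ (hMW (haM M (hT.mpr hM)))⟩

theorem exists_isIrredRep_inf_ker_inf_eq_bot {G : Type} [Group G] [Finite G]
    {H K N : Subgroup G} [N.Normal] (hHK : H ≤ K) (hNH : Disjoint N H)
    (hdist : DistribOn (Set.Icc H K)) :
    ∃ W : FDRep ℂ G, IsIrredRep W.ρ ∧ N ⊓ W.ρ.ker ⊓ K = ⊥ := by
  obtain ⟨W, hW, hWM⟩ := exists_isIrredRep_forall_not_le_ker hHK inf_le_right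
    (hNH.symm.mono_right inf_le_left) hdist
  refine ⟨W, hW, by_contra fun hD => ?_⟩
  have hnorm : K ≤ normalizer (N ⊓ W.ρ.ker ⊓ K) :=
    (le_inf (le_inf le_normalizer_of_normal le_normalizer_of_normal) le_normalizer).trans
      ((inf_le_inf_right _ inf_normalizer_le_normalizer_inf).trans inf_normalizer_le_normalizer_inf)
  obtain ⟨M, hM, hMD⟩ := exists_mem_minimalNormalizedBy_le
    (inf_le_inf_right K inf_le_left) hnorm hD
  exact hWM M hM (hMD.trans (inf_le_left.trans inf_le_right))

theorem exists_isIrredRep_family_ker_inf_eq_bot {G : Type} [Group G] [Finite G] {ℓ : ℕ}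
    (H : Fin (ℓ + 1) → Subgroup G) (h0 : H 0 = ⊥) (hle : ∀ i : Fin ℓ, H i.castSucc ≤ H i.succ)
    (hdist : ∀ i : Fin ℓ, DistribOn (Set.Icc (H i.castSucc) (H i.succ))) (n : ℕ)
    (hn : n < ℓ + 1) : ∃ V : Fin n → FDRep ℂ G, (∀ j, IsIrredRep (V j).ρ) ∧
      (piRep fun j => (V j).ρ).ker ⊓ H ⟨n, hn⟩ = ⊥ := by
  induction n with
  | zero => exact ⟨Fin.elim0, fun j => j.elim0, by rw [Fin.zero_eta, h0, inf_bot_eq]⟩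
  | succ n ih =>
    obtain ⟨V, hV, hker⟩ := ih (by omega)
    obtain ⟨W, hW, hWker⟩ := exists_isIrredRep_inf_ker_inf_eq_bot (hle ⟨n, by omega⟩)
      (disjoint_iff.mpr hker) (hdist ⟨n, by omega⟩)
    refine ⟨Fin.snoc (α := fun _ => FDRep ℂ G) V W, Fin.lastCases (by rw [Fin.snoc_last]; exact hW)
      fun j => by rw [Fin.snoc_castSucc]; exact hV j, ?_⟩
    rw [← hWker]
    congr 1
    ext g
    rw [mem_inf, mem_ker_piRep, mem_ker_piRep, Fin.forall_fin_succ', Fin.snoc_last]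
    exact and_congr_left' (forall_congr' fun j => by rw [Fin.snoc_castSucc])

/-- If a finite group `G` has a chain `{e} = H_0 < H_1 < ⋯ < H_ℓ = G` of subgroups with
each interval `[H_i, H_{i+1}]` distributive, then `G` has a faithful complex
representation which is a direct sum of at most `ℓ` irreducible representations. -/
theorem faithful_rep_of_distributive_chain {G : Type} [Group G] [Finite G] (ℓ : ℕ)
    (H : Fin (ℓ + 1) → Subgroup G)
    (h0 : H 0 = ⊥) (hlast : H (Fin.last ℓ) = ⊤)
    (hlt : ∀ i : Fin ℓ, H i.castSucc < H i.succ)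
    (hdist : ∀ i : Fin ℓ, ∀ x y z : Subgroup G,
      H i.castSucc ≤ x → x ≤ H i.succ → H i.castSucc ≤ y → y ≤ H i.succ →
      H i.castSucc ≤ z → z ≤ H i.succ → x ⊓ (y ⊔ z) = (x ⊓ y) ⊔ (x ⊓ z)) :
    ∃ n : ℕ, n ≤ ℓ ∧ ∃ V : Fin n → FDRep ℂ G,
      (∀ i, IsIrredRep (V i).ρ) ∧
      Function.Injective ⇑(piRep fun i => (V i).ρ) := by
  obtain ⟨V, hV, hker⟩ := exists_isIrredRep_family_ker_inf_eq_bot H h0 (fun i => (hlt i).le)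
    (fun i x hx y hy z hz => hdist i x y z hx.1 hx.2 hy.1 hy.2 hz.1 hz.2) ℓ ℓ.lt_succ_self
  rw [show H ⟨ℓ, _⟩ = ⊤ from hlast, inf_top_eq] at hker
  exact ⟨ℓ, le_rfl, V, hV, (MonoidHom.ker_eq_bot_iff _).mp hker⟩
end
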